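/- Under the hypotheses of the bi-orthonormal system with ε skew-symmetric, ε(χ_n')=χ_n, and Corollary ∫ψ_n = [n even]: ⟨ψ_n, ε(2ψ_{n+1})⟩ = −[n even] and ⟨ψ_n, ε(2ψ_{n−1})⟩ = [n odd]. -/

import Mathlib

open Real MeasureTheory

/-- The antiderivative operator `(εf)(x) = (1/2)∫_Ω sgn(x−y) f(y) dy`. -/
noncomputable def eps (Ω : Set ℝ) (f : ℝ → ℝ) (x : ℝ) : ℝ :=
  (1 / 2) * ∫ y in Ω, Real.sign (x - y) * f y


lemma measurable_realSign : Measurable Real.sign := by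
  unfold Real.sign
  exact Measurable.ite (measurableSet_lt measurable_id measurable_const) measurable_const
    (Measurable.ite (measurableSet_lt measurable_const measurable_id) measurable_const
      measurable_const)

lemma eps_skew (Ω : Set ℝ) (hΩ : MeasurableSet Ω) (f g : ℝ → ℝ)
    (hf : IntegrableOn f Ω) (hg : IntegrableOn g Ω) :
    ∫ x in Ω, f x * eps Ω g x = - ∫ x in Ω, g x * eps Ω f x := by
  set μ := volume.restrict Ω
  have hker : ∀ (u v : ℝ → ℝ), IntegrableOn u Ω → IntegrableOn v Ω →
      Integrable (fun p : ℝ × ℝ => Real.sign (p.1 - p.2) * (u p.1 * v p.2)) (μ.prod μ) := by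
    intro u v hu hv
    refine Integrable.bdd_mul (c := 1) (Integrable.mul_prod hu hv) ?_ (Filter.Eventually.of_forall fun p => ?_)
    · exact (measurable_realSign.comp (measurable_fst.sub measurable_snd)).aestronglyMeasurable
    · rw [Real.norm_eq_abs]
      rcases lt_trichotomy (p.1 - p.2) 0 with h | h | h
      · simp [Real.sign_of_neg h]
      · simp [h]
      · simp [Real.sign_of_pos h]
  have key : ∀ (u v : ℝ → ℝ), IntegrableOn u Ω → IntegrableOn v Ω →
      ∫ x in Ω, u x * eps Ω v x
        = (1/2) * ∫ p, Real.sign (p.1 - p.2) * (u p.1 * v p.2) ∂(μ.prod μ) := by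
    intro u v hu hv
    rw [MeasureTheory.integral_prod _ (hker u v hu hv)]
    rw [← MeasureTheory.integral_const_mul]
    refine setIntegral_congr_fun hΩ fun x _ => ?_
    show u x * eps Ω v x = (1/2) * ∫ y in Ω, Real.sign (x - y) * (u x * v y)
    have : (fun y => Real.sign (x - y) * (u x * v y))
        = fun y => u x * (Real.sign (x - y) * v y) := funext fun y => by ring
    rw [this, MeasureTheory.integral_const_mul, eps]
    ring
  rw [key f g hf hg, key g f hg hf]
  rw [← MeasureTheory.integral_prod_swap (fun p : ℝ × ℝ => Real.sign (p.1 - p.2) * (g p.1 * f p.2))]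
  rw [← mul_neg, ← MeasureTheory.integral_neg]
  congr 1
  refine integral_congr_ae (Filter.Eventually.of_forall fun p => ?_)
  simp only [Prod.fst_swap, Prod.snd_swap]
  have : Real.sign (p.2 - p.1) = - Real.sign (p.1 - p.2) := by
    rw [← Real.sign_neg]; ring_nf
  rw [this]; ring

theorem stmt13 (Ω : Set ℝ) (hΩ : MeasurableSet Ω) (ψ χ : ℕ → ℝ → ℝ)
    (hψ : ∀ n, IntegrableOn (ψ n) Ω)
    (hprod : ∀ n m, IntegrableOn (fun x => ψ n x * eps Ω (ψ m) x) Ω)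
    (hbi : ∀ n m, ∫ x in Ω, χ n x * ψ m x = if n = m then 1 else 0)
    (hchi : ∀ (n : ℕ) (x : ℝ),
      χ n x = (if n = 0 then 0 else 2 * eps Ω (ψ (n - 1)) x) - 2 * eps Ω (ψ (n + 1)) x)
    (hint : ∀ n, ∫ x in Ω, ψ n x = if Even n then 1 else 0) :
    ∀ n : ℕ,
      (∫ x in Ω, ψ n x * (2 * eps Ω (ψ (n + 1)) x) = -(if Even n then 1 else 0)) ∧
      (∫ x in Ω, ψ n x * (if n = 0 then 0 else 2 * eps Ω (ψ (n - 1)) x)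
          = if Odd n then 1 else 0) := by
  have ha_int : ∀ n m, IntegrableOn (fun x => ψ n x * (2 * eps Ω (ψ m) x)) Ω := by
    intro n m
    have h : (fun x => ψ n x * (2 * eps Ω (ψ m) x))
        = fun x => 2 * (ψ n x * eps Ω (ψ m) x) := funext fun x => by ring
    rw [h]; exact (hprod n m).const_mul 2
  have hb_int : ∀ n, IntegrableOn
      (fun x => ψ n x * (if n = 0 then 0 else 2 * eps Ω (ψ (n - 1)) x)) Ω := by
    intro n
    rcases n with _ | k
    · simpa using (integrable_zero _ _ _ : Integrable (fun _ : ℝ => (0:ℝ)) (volume.restrict Ω))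
    · simpa using ha_int (k + 1) k
  have htwo : ∀ a b, ∫ x in Ω, ψ a x * (2 * eps Ω (ψ b) x)
      = 2 * ∫ x in Ω, ψ a x * eps Ω (ψ b) x := by
    intro a b
    rw [← MeasureTheory.integral_const_mul]
    exact integral_congr_ae (Filter.Eventually.of_forall fun x => by ring)
  have hswap : ∀ n, ∫ x in Ω, ψ (n + 1) x * (2 * eps Ω (ψ n) x)
      = - ∫ x in Ω, ψ n x * (2 * eps Ω (ψ (n + 1)) x) := by
    intro n
    rw [htwo, htwo, eps_skew Ω hΩ (ψ (n + 1)) (ψ n) (hψ _) (hψ _)]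
    ring
  have hsub : ∀ n,
      (∫ x in Ω, ψ n x * (if n = 0 then 0 else 2 * eps Ω (ψ (n - 1)) x))
        - (∫ x in Ω, ψ n x * (2 * eps Ω (ψ (n + 1)) x)) = 1 := by
    intro n
    rw [← MeasureTheory.integral_sub (hb_int n) (ha_int n (n + 1))]
    have : ∀ x, ψ n x * (if n = 0 then 0 else 2 * eps Ω (ψ (n - 1)) x)
        - ψ n x * (2 * eps Ω (ψ (n + 1)) x) = χ n x * ψ n x := by
      intro x; rw [hchi n x]; ring
    rw [integral_congr_ae (Filter.Eventually.of_forall fun x => this x)]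
    simpa using hbi n n
  have hb : ∀ n, ∫ x in Ω, ψ n x * (if n = 0 then 0 else 2 * eps Ω (ψ (n - 1)) x)
      = if Odd n then 1 else 0 := by
    intro n
    induction n with
    | zero => simp
    | succ k ih =>
      have ha : ∫ x in Ω, ψ k x * (2 * eps Ω (ψ (k + 1)) x)
          = (if Odd k then 1 else 0) - 1 := by
        have := hsub k; rw [ih] at this; linarith
      have : ∫ x in Ω, ψ (k + 1) x * (if k + 1 = 0 then 0 else 2 * eps Ω (ψ (k + 1 - 1)) x)
          = ∫ x in Ω, ψ (k + 1) x * (2 * eps Ω (ψ k) x) := by simp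
      rw [this, hswap k, ha]
      rcases Nat.even_or_odd k with h | h
      · simp [h, Nat.even_add_one, ← Nat.not_even_iff_odd, Nat.not_odd_iff_even.mpr h]
      · simp [h, ← Nat.not_even_iff_odd, Nat.even_add_one,
          (Nat.odd_add_one).mpr, Nat.not_even_iff_odd.mpr h]
  intro n
  refine ⟨?_, hb n⟩
  have ha : ∫ x in Ω, ψ n x * (2 * eps Ω (ψ (n + 1)) x)
      = (if Odd n then 1 else 0) - 1 := by
    have := hsub n; rw [hb n] at this; linarith
  rw [ha]
  rcases Nat.even_or_odd n with h | h
  · simp [h, Nat.not_odd_iff_even.mpr h]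
  · simp [h, Nat.not_even_iff_odd.mpr h]
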